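/- arXiv:1705.09673 — 2 statements merged into one kernel-verified Lean document; each statement's English description precedes it below -/
import Mathlib

section
/- Let p be a prime with 2 ≤ r ≤ p ≤ k. Then w(r, k) > p^{r-1} · (w(1, k) - 1) = p^{r-1} · (k - 1); that is, there exists an r-coloring of {1, ..., p^{r-1}(k-1)} with no monochromatic arithmetic progression of length k. -/
/-!
The coloring is built digit by digit in base `p`: on the 0-based positions, the coloring with
`m + 1` colors is `f (m + 1) y = (f m (y / p) + y % p) % (m + 1)`, with `f 0 = 0`.
Take a `k`-term progression with difference `d` inside `[0, p ^ m * (k - 1))`. If `p ∣ d`,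
dividing by `p` maps it to a progression for `f m` on a range `p` times shorter, and the colors
along it are shifted by the constant `y % p`, so induction applies. If `p ∤ d`, the first `p ≤ k`
terms meet every residue mod `p`; at the term whose residue is `(f (m + 1) a + 1) % (m + 1)` the
color is `(f m (·) + f (m + 1) a + 1) % (m + 1) ≠ f (m + 1) a`, because `0 ≤ f m (·) < m`.
Finally, `vdw r k` is an infimum, so bounding it from below also needs the finitary van der Waerden
theorem, which follows from Hales–Jewett by summing coordinates.
-/

/-- `hasAP c N k` : the coloring `c` of `{1,...,N}` contains a monochromatic
arithmetic progression of length `k` with positive common difference. -/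
def hasAP (c : ℕ → ℕ) (N k : ℕ) : Prop :=
  ∃ a d, 1 ≤ a ∧ 1 ≤ d ∧ a + (k - 1) * d ≤ N ∧ ∀ i < k, c (a + i * d) = c a

/-- `validColoring r k N c` : `c` is an `r`-coloring of `{1,...,N}` with no
monochromatic `k`-term arithmetic progression. -/
def validColoring (r k N : ℕ) (c : ℕ → ℕ) : Prop :=
  (∀ n, 1 ≤ n → n ≤ N → 1 ≤ c n ∧ c n ≤ r) ∧ ¬ hasAP c N k

/-- The van der Waerden number: least `N` such that no valid `r`-coloring of
`{1,...,N}` (avoiding `k`-term monochromatic APs) exists. -/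
noncomputable def vdw (r k : ℕ) : ℕ := sInf {N | ¬ ∃ c : ℕ → ℕ, validColoring r k N c}

/-- The block `S_i(r,k)`: `j`-th entry (`1 ≤ j ≤ p`) is `((i + j - 2) % r) + 1`. -/
def Sblock (r i j : ℕ) : ℕ := ((i + j - 2) % r) + 1

open Finset Combinatorics

theorem Combinatorics.Line.sum_val_apply {n : ℕ} {ι : Type*} [Fintype ι] (l : Line (Fin n) ι)
    (x : Fin n) :
    ∑ j, (l x j : ℕ) = ∑ j, ((l.idxFun j).map Fin.val).getD 0 + x * #{j | l.idxFun j = none} := by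
  have hcoord : ∀ j, (l x j : ℕ) =
      ((l.idxFun j).map Fin.val).getD 0 + if l.idxFun j = none then (x : ℕ) else 0 := by
    intro j
    cases h : l.idxFun j <;> simp [h]
  simp only [hcoord, sum_add_distrib, sum_ite, sum_const, smul_eq_mul]
  ring

theorem exists_forall_exists_mono_arithProg (κ : Type*) [Finite κ] (k : ℕ) :
    ∃ N, ∀ C : ℕ → κ, ∃ a d, 0 < d ∧ a + k * d ≤ N ∧ ∀ i ≤ k, C (a + i * d) = C a := by
  classical
  obtain ⟨ι, _, hι⟩ := Line.exists_mono_in_high_dimension (Fin (k + 1)) κ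
  refine ⟨Fintype.card ι * k, fun C => ?_⟩
  obtain ⟨l, c, hl⟩ := hι fun v => C (∑ j, (v j : ℕ))
  have hsum := l.sum_val_apply
  have hpoint : ∀ i : Fin (k + 1), C (∑ j, (l i j : ℕ)) = c := hl
  refine ⟨∑ j, ((l.idxFun j).map Fin.val).getD 0, #{j | l.idxFun j = none},
    card_pos.mpr ⟨_, mem_filter.mpr ⟨mem_univ _, l.proper.choose_spec⟩⟩, ?_, fun i hi => ?_⟩
  · calc _ = ∑ j, (l (Fin.last k) j : ℕ) := by rw [hsum, Fin.val_last]
      _ ≤ ∑ _ : ι, k := sum_le_sum fun j _ => Fin.is_le _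
      _ = _ := by simp
  · have h0 := hpoint 0
    have hi' := hpoint ⟨i, by omega⟩
    rw [hsum] at h0 hi'
    simp only [Fin.val_zero, zero_mul, add_zero] at h0 hi'
    rw [hi', h0]

theorem Nat.exists_lt_add_mul_mod_eq {p d : ℕ} (hp : p.Prime) (hd : ¬ p ∣ d) (a : ℕ) {u : ℕ}
    (hu : u < p) : ∃ i < p, (a + i * d) % p = u := by
  have := Fact.mk hp
  have hd' : (d : ZMod p) ≠ 0 := by rwa [Ne, ZMod.natCast_eq_zero_iff]
  set z : ZMod p := (u - a) / d
  have hz : ((a + z.val * d : ℕ) : ZMod p) = u := by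
    push_cast
    rw [ZMod.natCast_zmod_val, div_mul_cancel₀ _ hd', add_sub_cancel]
  refine ⟨z.val, z.val_lt, ?_⟩
  rw [(ZMod.natCast_eq_natCast_iff' _ _ _).mp hz, Nat.mod_eq_of_lt hu]

-- `digitColoring p m` colors the 0-based positions with `0, …, m - 1`; the coloring of
-- `{1, …, N}` is obtained by shifting both the positions and the colors by one.
def digitColoring (p : ℕ) : ℕ → ℕ → ℕ
  | 0, _ => 0
  | m + 1, y => (digitColoring p m (y / p) + y % p) % (m + 1)

theorem digitColoring_succ (p m y : ℕ) :
    digitColoring p (m + 1) y = (digitColoring p m (y / p) + y % p) % (m + 1) := rfl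

theorem digitColoring_succ_lt (p m y : ℕ) : digitColoring p (m + 1) y < m + 1 :=
  Nat.mod_lt _ m.succ_pos

theorem digitColoring_add_mul_eq_iff {p : ℕ} (hp : 0 < p) (m a z : ℕ) :
    digitColoring p (m + 2) (a + p * z) = digitColoring p (m + 2) a ↔
      digitColoring p (m + 1) (a / p + z) = digitColoring p (m + 1) (a / p) := by
  rw [digitColoring_succ p (m + 1), digitColoring_succ p (m + 1), Nat.add_mul_div_left _ _ hp,
    Nat.add_mul_mod_self_left]
  refine ⟨fun h => Nat.ModEq.eq_of_lt_of_lt (Nat.ModEq.add_right_cancel' _ h) ?_ ?_,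
    fun h => by rw [h]⟩ <;>
  exact (digitColoring_succ_lt p m _).trans (Nat.lt_succ_self _)

theorem exists_digitColoring_ne_of_not_dvd {p m d : ℕ} (hp : p.Prime) (hm : m + 2 ≤ p)
    (hd : ¬ p ∣ d) (a : ℕ) :
    ∃ i < p, digitColoring p (m + 2) (a + i * d) ≠ digitColoring p (m + 2) a := by
  set C := digitColoring p (m + 2) a
  obtain ⟨i, hi, hres⟩ := Nat.exists_lt_add_mul_mod_eq hp hd a
    ((Nat.mod_lt (C + 1) (by omega : 0 < m + 2)).trans_le hm)
  refine ⟨i, hi, fun h => ?_⟩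
  rw [digitColoring_succ p (m + 1), hres, Nat.add_mod_mod, ← add_assoc] at h
  set F := digitColoring p (m + 1) ((a + i * d) / p)
  have hF : F < m + 1 := digitColoring_succ_lt p m _
  have hdvd : m + 2 ∣ F + 1 := by
    refine (Nat.modEq_zero_iff_dvd).mp (Nat.ModEq.add_right_cancel' C ?_)
    rw [Nat.ModEq, add_right_comm, h, zero_add,
      Nat.mod_eq_of_lt (digitColoring_succ_lt p (m + 1) a)]
  exact absurd (Nat.le_of_dvd (by omega) hdvd) (by omega)

theorem digitColoring_not_mono {p k : ℕ} (hp : p.Prime) (hpk : p ≤ k) {m : ℕ} (hm : m < p)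
    {a d : ℕ} (hd : 0 < d) (hlen : a + (k - 1) * d < p ^ m * (k - 1)) :
    ∃ i < k, digitColoring p (m + 1) (a + i * d) ≠ digitColoring p (m + 1) a := by
  induction m generalizing a d with
  | zero =>
    have : k - 1 ≤ (k - 1) * d := Nat.le_mul_of_pos_right _ hd
    rw [pow_zero, one_mul] at hlen
    omega
  | succ m ih =>
    by_cases hpd : p ∣ d
    · obtain ⟨e, rfl⟩ := hpd
      have hlen' : a / p + (k - 1) * e < p ^ m * (k - 1) := by
        rw [← Nat.add_mul_div_left _ _ hp.pos, Nat.div_lt_iff_lt_mul hp.pos]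
        calc a + p * ((k - 1) * e) = a + (k - 1) * (p * e) := by ring
          _ < p ^ (m + 1) * (k - 1) := hlen
          _ = p ^ m * (k - 1) * p := by ring
      obtain ⟨i, hi, hne⟩ := ih (by omega) (Nat.pos_of_mul_pos_left hd) hlen'
      refine ⟨i, hi, ?_⟩
      rw [show a + i * (p * e) = a + p * (i * e) by ring]
      exact (digitColoring_add_mul_eq_iff hp.pos m a (i * e)).not.mpr hne
    · obtain ⟨i, hi, hne⟩ := exists_digitColoring_ne_of_not_dvd hp hm hpd a
      exact ⟨i, hi.trans_le hpk, hne⟩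

theorem hasAP.mono {c : ℕ → ℕ} {N N' k : ℕ} (h : hasAP c N k) (hN : N ≤ N') : hasAP c N' k := by
  obtain ⟨a, d, ha, hd, hlen, hmono⟩ := h
  exact ⟨a, d, ha, hd, hlen.trans hN, hmono⟩

theorem validColoring.mono {r k N N' : ℕ} {c : ℕ → ℕ} (h : validColoring r k N c)
    (hN : N' ≤ N) : validColoring r k N' c :=
  ⟨fun n hn hnN' => h.1 n hn (hnN'.trans hN), fun hAP => h.2 (hAP.mono hN)⟩

theorem validColoring_digitColoring {p r k : ℕ} (hp : p.Prime) (hr : 1 ≤ r) (hrp : r ≤ p)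
    (hpk : p ≤ k) :
    validColoring r k (p ^ (r - 1) * (k - 1)) (fun x => digitColoring p r (x - 1) + 1) := by
  obtain ⟨m, rfl⟩ : ∃ m, r = m + 1 := ⟨r - 1, by omega⟩
  rw [Nat.add_sub_cancel]
  refine ⟨fun n _ _ => ?_, ?_⟩
  · have := digitColoring_succ_lt p m (n - 1)
    dsimp only
    omega
  · rintro ⟨a, d, ha, hd, hlen, hmono⟩
    obtain ⟨i, hi, hne⟩ := digitColoring_not_mono hp hpk (m := m) (a := a - 1) (by omega) hd
      (by omega)
    have := hmono i hi
    dsimp only at this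
    rw [show a - 1 + i * d = a + i * d - 1 by omega] at hne
    omega

theorem exists_not_validColoring (r : ℕ) {k : ℕ} (hk : 1 ≤ k) :
    ∃ N, ¬ ∃ c, validColoring r k N c := by
  obtain ⟨k, rfl⟩ : ∃ k', k = k' + 1 := ⟨k - 1, by omega⟩
  obtain ⟨N, hN⟩ := exists_forall_exists_mono_arithProg (Fin (r + 1)) k
  refine ⟨N + 1, fun ⟨c, hrange, hnoAP⟩ => hnoAP ?_⟩
  obtain ⟨a, d, hd, hlen, hmono⟩ := hN fun n => ⟨min (c (n + 1)) r, by omega⟩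
  refine ⟨a + 1, d, by omega, hd, by simpa [add_right_comm] using hlen, fun i hi => ?_⟩
  have hid : i * d ≤ k * d := Nat.mul_le_mul_right _ (by omega)
  have h1 := hrange (a + i * d + 1) (by omega) (by omega)
  have h2 := hrange (a + 1) (by omega) (by omega)
  have h : min (c (a + i * d + 1)) r = min (c (a + 1)) r := Fin.ext_iff.mp (hmono i (by omega))
  rw [add_right_comm]
  omega

theorem lt_vdw_of_validColoring {r k N : ℕ} {c : ℕ → ℕ} (hk : 1 ≤ k)
    (hc : validColoring r k N c) : N < vdw r k := by
  by_contra! hle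
  obtain ⟨N', hN'⟩ := exists_not_validColoring r hk
  exact Nat.sInf_mem (s := {N | ¬ ∃ c, validColoring r k N c}) ⟨N', hN'⟩ ⟨c, hc.mono hle⟩

/-- For a prime `p` with `2 ≤ r ≤ p ≤ k`, `w(r,k) > p^(r-1) * (k-1)`; that is,
there is an `r`-coloring of `{1,...,p^(r-1)*(k-1)}` with no monochromatic
`k`-term AP. -/
theorem vdw_gt_pow (p r k : ℕ) (hp : p.Prime) (hr : 2 ≤ r) (hrp : r ≤ p)
    (hpk : p ≤ k) :
    p ^ (r - 1) * (k - 1) < vdw r k ∧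
      ∃ c : ℕ → ℕ, validColoring r k (p ^ (r - 1) * (k - 1)) c := by
  have hc := validColoring_digitColoring hp (by omega) hrp hpk
  exact ⟨lt_vdw_of_validColoring (by linarith [hp.two_le]) hc, _, hc⟩
end

section
/- Fix k and let p be the largest prime ≤ k. For each r ∈ {1, 2, ..., p} there is an explicit r-coloring of {1, 2, ..., p^{r-1}(k-1)} containing no monochromatic k-term arithmetic progression, constructed recursively: start with the constant 1-coloring of {1,...,k-1}, and at each stage replace each element of color i in the current (r-1)-coloring by the block S_i(r,k) of length p. -/
theorem Nat.exists_lt_add_mul_mod_eq_s16 {n d : ℕ} (hn : 0 < n) (hd : d.Coprime n) (a : ℕ)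
    {s : ℕ} (hs : s < n) : ∃ i < n, (a + i * d) % n = s := by
  obtain ⟨i, hi, hmod⟩ := Nat.exists_mul_mod_eq_of_coprime (s + n * a - a) hd hn.ne'
  have hshift : a + (s + n * a - a) = s + n * a := by
    have := Nat.le_mul_of_pos_left a hn
    omega
  refine ⟨i, hi, ?_⟩
  rw [Nat.add_mod, mul_comm, hmod, ← Nat.add_mod, hshift, Nat.add_mul_mod_self_left,
    Nat.mod_eq_of_lt hs]

theorem Nat.sub_one_div_lt_of_le_mul {n p N : ℕ} (hn : 1 ≤ n) (h : n ≤ p * N) :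
    (n - 1) / p < N := by
  rcases p.eq_zero_or_pos with rfl | hp
  · omega
  · rw [Nat.div_lt_iff_lt_mul hp, mul_comm]
    omega

section Sblock

variable {r i i' j : ℕ}

theorem Sblock_succ (hi : 1 ≤ i) : Sblock r i (j + 1) = (i - 1 + j) % r + 1 := by
  unfold Sblock
  congr 2
  omega

theorem one_le_Sblock : 1 ≤ Sblock r i j :=
  Nat.le_add_left 1 _

theorem Sblock_le (hr : 0 < r) : Sblock r i j ≤ r :=
  Nat.mod_lt _ hr

theorem eq_of_Sblock_eq (hi : 1 ≤ i) (hir : i ≤ r) (hi' : 1 ≤ i') (hi'r : i' ≤ r)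
    (h : Sblock r i (j + 1) = Sblock r i' (j + 1)) : i = i' := by
  rw [Sblock_succ hi, Sblock_succ hi'] at h
  have hmod : i - 1 ≡ i' - 1 [MOD r] := Nat.ModEq.add_right_cancel' j (Nat.add_right_cancel h)
  have := hmod.eq_of_lt_of_lt (by omega) (by omega)
  omega

/-- Entry `u % r + 1` of `S_i` is `u + i` modulo `r`, which is not `u` when `0 < i < r`. -/
theorem Sblock_mod_ne (hi : 1 ≤ i) (hir : i < r) (u : ℕ) : Sblock r i (u % r + 1) ≠ u := by
  intro h
  rw [Sblock_succ hi, Nat.add_mod_mod, show i - 1 + u = i + (u - 1) by omega] at h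
  have hlt : u - 1 < r := by have := Nat.mod_lt (i + (u - 1)) (by omega : 0 < r); omega
  have hshift : i + (u - 1) ≡ 0 + (u - 1) [MOD r] := by
    unfold Nat.ModEq
    rw [zero_add, Nat.mod_eq_of_lt hlt]
    omega
  have hi0 : i % r = 0 % r := Nat.ModEq.add_right_cancel' (u - 1) hshift
  rw [Nat.mod_eq_of_lt hir, Nat.zero_mod] at hi0
  omega

end Sblock

/-- Element `b` of the old coloring becomes the block of positions `p * (b - 1) + 1, ..., p * b`,
filled with `S_{c b}(r, k)`. -/
def blockSubst (p r : ℕ) (c : ℕ → ℕ) (n : ℕ) : ℕ :=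
  Sblock r (c ((n - 1) / p + 1)) ((n - 1) % p + 1)

section blockSubst

variable {p r k N a : ℕ} {c : ℕ → ℕ}

theorem blockSubst_add_mul (ha : 1 ≤ a) (hp : 0 < p) (t : ℕ) :
    blockSubst p r c (a + p * t) = Sblock r (c ((a - 1) / p + t + 1)) ((a - 1) % p + 1) := by
  unfold blockSubst
  rw [show a + p * t - 1 = a - 1 + p * t by omega, Nat.add_mul_div_left _ _ hp,
    Nat.add_mul_mod_self_left]

theorem hasAP_of_blockSubst_of_dvd (hp : 0 < p)
    (hc : ∀ n, 1 ≤ n → n ≤ N → 1 ≤ c n ∧ c n ≤ r) {e : ℕ} (ha : 1 ≤ a) (he : 1 ≤ e)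
    (hlast : a + (k - 1) * (p * e) ≤ p * N)
    (hmono : ∀ i < k, blockSubst p r c (a + i * (p * e)) = blockSubst p r c a) :
    hasAP c N k := by
  have hblock : ∀ i ≤ k - 1, (a - 1) / p + i * e + 1 ≤ N := fun i hi => by
    have hle : a + p * (i * e) ≤ p * N := by
      have := Nat.mul_le_mul_right (p * e) hi
      rw [show p * (i * e) = i * (p * e) by ring]
      omega
    have := Nat.sub_one_div_lt_of_le_mul (by omega) hle
    rw [show a + p * (i * e) - 1 = a - 1 + p * (i * e) by omega,
      Nat.add_mul_div_left _ _ hp] at this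
    omega
  refine ⟨(a - 1) / p + 1, e, Nat.le_add_left _ _, he, by have := hblock (k - 1) le_rfl; omega,
    fun i hi => ?_⟩
  have h := hmono i hi
  rw [show i * (p * e) = p * (i * e) by ring, blockSubst_add_mul ha hp] at h
  have hi := hc _ (Nat.le_add_left _ _) (hblock i (by omega))
  have h0 := hc _ (Nat.le_add_left _ _) (hblock 0 (by omega))
  rw [zero_mul, add_zero] at h0
  rw [show (a - 1) / p + 1 + i * e = (a - 1) / p + i * e + 1 by ring]
  exact eq_of_Sblock_eq hi.1 hi.2 h0.1 h0.2 h

theorem exists_blockSubst_ne_of_not_dvd (hp : p.Prime) (hrp : r ≤ p)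
    (hc : ∀ n, 1 ≤ n → n ≤ N → 1 ≤ c n ∧ c n < r) {d : ℕ} (ha : 1 ≤ a) (hpd : ¬p ∣ d)
    (hterm : ∀ i < p, a + i * d ≤ p * N) :
    ∃ i < p, blockSubst p r c (a + i * d) ≠ blockSubst p r c a := by
  set u := blockSubst p r c a
  have hr : 0 < r := by
    have := hc _ (Nat.le_add_left _ _)
      (Nat.sub_one_div_lt_of_le_mul ha (by simpa using hterm 0 hp.pos))
    omega
  have hcop : d.Coprime p := Nat.coprime_comm.1 ((Nat.Prime.coprime_iff_not_dvd hp).2 hpd)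
  obtain ⟨i, hip, hoff⟩ :=
    Nat.exists_lt_add_mul_mod_eq_s16 hp.pos hcop (a - 1) ((Nat.mod_lt u hr).trans_le hrp)
  refine ⟨i, hip, ?_⟩
  have hblk := hc _ (Nat.le_add_left _ _) (Nat.sub_one_div_lt_of_le_mul (by omega) (hterm i hip))
  show Sblock r (c ((a + i * d - 1) / p + 1)) ((a + i * d - 1) % p + 1) ≠ u
  rw [show a + i * d - 1 = a - 1 + i * d by omega] at hblk ⊢
  rw [hoff]
  exact Sblock_mod_ne hblk.1 hblk.2 u

theorem validColoring_blockSubst (hp : p.Prime) (hpk : p ≤ k)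
    (hrp : r ≤ p) (hc : validColoring (r - 1) k N c) :
    validColoring r k (p * N) (blockSubst p r c) := by
  obtain ⟨hrange, hnoAP⟩ := hc
  have hcr : ∀ n, 1 ≤ n → n ≤ N → 1 ≤ c n ∧ c n < r := fun n h1 h2 => by
    have := hrange n h1 h2
    omega
  refine ⟨fun n hn hnN => ⟨one_le_Sblock, Sblock_le ?_⟩, ?_⟩
  · have := hcr _ (Nat.le_add_left _ _) (Nat.sub_one_div_lt_of_le_mul hn hnN)
    omega
  rintro ⟨a, d, ha, hd, hlast, hmono⟩
  by_cases hpd : p ∣ d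
  · obtain ⟨e, rfl⟩ := hpd
    have he : 1 ≤ e := Nat.pos_of_ne_zero (by rintro rfl; simp at hd)
    exact hnoAP (hasAP_of_blockSubst_of_dvd hp.pos
      (fun n h1 h2 => (hcr n h1 h2).imp_right le_of_lt) ha he hlast hmono)
  · have hterm : ∀ i < p, a + i * d ≤ p * N := fun i hi => by
      have := Nat.mul_le_mul_right d (show i ≤ k - 1 by omega)
      omega
    obtain ⟨i, hip, hne⟩ := exists_blockSubst_ne_of_not_dvd hp hrp hcr ha hpd hterm
    exact hne (hmono i (by omega))

end blockSubst

theorem not_hasAP_sub_one (c : ℕ → ℕ) (k : ℕ) : ¬hasAP c (k - 1) k := by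
  rintro ⟨a, d, ha, hd, hlast, -⟩
  have := Nat.mul_le_mul_left (k - 1) hd
  omega

theorem validColoring_const_sub_one (k : ℕ) : validColoring 1 k (k - 1) fun _ => 1 :=
  ⟨fun _ _ _ => ⟨le_rfl, le_rfl⟩, not_hasAP_sub_one _ k⟩

theorem recursive_construction_general (k p : ℕ) (hp : p.Prime) (hpk : p ≤ k) :
    ∀ r, 1 ≤ r → r ≤ p →
      ∃ c : ℕ → ℕ, validColoring r k (p ^ (r - 1) * (k - 1)) c := by
  intro r hr
  induction r, hr using Nat.le_induction with
  | base => exact fun _ => ⟨_, by simpa using validColoring_const_sub_one k⟩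
  | succ r hr ih =>
    intro hrp
    obtain ⟨c, hc⟩ := ih (by omega)
    have hN : p ^ (r + 1 - 1) * (k - 1) = p * (p ^ (r - 1) * (k - 1)) := by
      rw [← mul_assoc, ← pow_succ', Nat.sub_add_cancel hr, Nat.add_sub_cancel]
    rw [hN]
    exact ⟨_, validColoring_blockSubst hp hpk hrp hc⟩

/-- Corollary: for `p` the largest prime `≤ k` and every `1 ≤ r ≤ p`, there
is an `r`-coloring of `{1,...,p^(r-1)*(k-1)}` with no monochromatic `k`-term
AP (constructed recursively by block substitution). -/
theorem recursive_construction (k p : ℕ) (hk : 2 ≤ k) (hp : p.Prime)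
    (hpk : p ≤ k) (hlargest : ∀ q, Nat.Prime q → q ≤ k → q ≤ p) :
    ∀ r, 1 ≤ r → r ≤ p →
      ∃ c : ℕ → ℕ, validColoring r k (p ^ (r - 1) * (k - 1)) c :=
  recursive_construction_general k p hp hpk
end
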